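/- arXiv:1206.4687 — 10 statements merged into one kernel-verified Lean document; each statement's English description precedes it below -/
import Mathlib

section
/- Let m = 2t+1 with t ≥ 2. Then gcd(2^m - 1, 2^t + 2) = 1. -/
lemma seven_not_dvd (k : ℕ) : ¬ (7 ∣ 2 ^ k + 1) := by
  intro h
  obtain ⟨c, hc⟩ := h
  have h8 : (2:ℕ) ^ k % 7 = 2 ^ (k % 3) % 7 := by
    conv_lhs => rw [← Nat.div_add_mod k 3]
    rw [pow_add, pow_mul, Nat.mul_mod, Nat.pow_mod]
    norm_num
  have hk : k % 3 < 3 := Nat.mod_lt _ (by norm_num)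
  interval_cases h : (k % 3) <;> norm_num [h] at h8 <;> omega

theorem stmt2 (t : ℕ) (ht : 2 ≤ t) :
    Nat.gcd (2 ^ (2 * t + 1) - 1) (2 ^ t + 2) = 1 := by
  set d := Nat.gcd (2 ^ (2 * t + 1) - 1) (2 ^ t + 2) with hd
  have h1 : d ∣ 2 ^ (2 * t + 1) - 1 := Nat.gcd_dvd_left _ _
  have h2 : d ∣ 2 ^ t + 2 := Nat.gcd_dvd_right _ _
  have hpow1 : (1:ℕ) ≤ 2 ^ (2 * t + 1) := Nat.one_le_two_pow
  have hodd : ¬ (2 ∣ d) := by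
    intro h2d
    have := h2d.trans h1
    have hev : 2 ∣ 2 ^ (2 * t + 1) := dvd_pow_self 2 (by omega)
    omega
  have heq : 2 ^ t + 2 = 2 * (2 ^ (t - 1) + 1) := by
    have : 2 ^ t = 2 * 2 ^ (t - 1) := by
      conv_lhs => rw [show t = (t - 1) + 1 by omega]
      ring
    omega
  have h3 : d ∣ 2 ^ (t - 1) + 1 := by
    rw [heq] at h2
    have hcop : Nat.Coprime d 2 :=
      ((Nat.Prime.coprime_iff_not_dvd Nat.prime_two).mpr hodd).symm
    exact Nat.Coprime.dvd_of_dvd_mul_left hcop h2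
  have h8 : (8:ℕ) ≤ 2 ^ (t + 2) := by
    calc (8:ℕ) = 2 ^ 3 := by norm_num
    _ ≤ 2 ^ (t + 2) := Nat.pow_le_pow_right (by norm_num) (by omega)
  have key : 2 ^ (2 * t + 1) - 1 = (2 ^ (t - 1) + 1) * (2 ^ (t + 2) - 8) + 7 := by
    have ha2 : (2:ℕ) ^ (t + 2) = 2 ^ (t - 1) * 8 := by
      have : t + 2 = (t - 1) + 3 := by omega
      rw [this, pow_add]; norm_num
    have hsplit : (2:ℕ) ^ (2 * t + 1) = 2 ^ (t - 1) * (2 ^ (t - 1) * 8) := by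
      rw [← ha2, ← pow_add]
      congr 1
      omega
    rw [ha2] at h8
    rw [hsplit, ha2]
    have hp : (1:ℕ) ≤ 2 ^ (t - 1) * (2 ^ (t - 1) * 8) := Nat.succ_le_of_lt (by positivity)
    zify [hp, h8]
    ring
  have h7 : d ∣ 7 := by
    have hprod : d ∣ (2 ^ (t - 1) + 1) * (2 ^ (t + 2) - 8) := h3.mul_right _
    have := Nat.dvd_sub h1 hprod
    rwa [key, Nat.add_sub_cancel_left] at this
  have hle : d ≤ 7 := Nat.le_of_dvd (by norm_num) h7
  have hpos : 1 ≤ d := by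
    rcases Nat.eq_zero_or_pos d with h0 | h
    · rw [h0] at h7; omega
    · exact h
  interval_cases d <;> first
    | rfl
    | (exfalso; revert h7; decide)
    | (exact absurd h3 (seven_not_dvd _))
end

section
/- Let m = 2t+1 with t ≥ 1. Then gcd(2^m - 1, 2^t + 3) = 1. -/
lemma not_seventeen_dvd (t : ℕ) : ¬ (17 ∣ 2 ^ t + 3) := by
  have hper : 2 ^ t % 17 = 2 ^ (t % 8) % 17 := by
    conv_lhs => rw [← Nat.div_add_mod t 8, pow_add, pow_mul, Nat.mul_mod, Nat.pow_mod]
    norm_num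
  intro h
  have h0 : (2 ^ t + 3) % 17 = 0 := by obtain ⟨k, hk⟩ := h; omega
  rw [Nat.add_mod, hper] at h0
  have hlt : t % 8 < 8 := Nat.mod_lt _ (by norm_num)
  interval_cases h' : t % 8 <;> simp_all

theorem stmt3 (t : ℕ) (ht : 1 ≤ t) :
    Nat.gcd (2 ^ (2 * t + 1) - 1) (2 ^ t + 3) = 1 := by
  rcases Nat.lt_or_ge t 2 with h2 | h2
  · interval_cases t <;> decide
  · have hle : 4 ≤ 2 ^ t := by
      calc 4 = 2 ^ 2 := by norm_num
      _ ≤ 2 ^ t := Nat.pow_le_pow_right (by norm_num) (by omega)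
    have e : 2 ^ (2 * t + 1) = 2 ^ t * 2 ^ t * 2 := by
      rw [two_mul, pow_succ, pow_add]
    have key : 2 ^ (2 * t + 1) - 1 = 17 + 2 * (2 ^ t - 3) * (2 ^ t + 3) := by
      rw [e]
      have h3 : 3 ≤ 2 ^ t := by omega
      have h1 : 1 ≤ 2 ^ t * 2 ^ t * 2 := Nat.one_le_iff_ne_zero.mpr (by positivity)
      zify [h3, h1]
      ring
    rw [key, Nat.gcd_add_mul_right_left]
    exact (Nat.Prime.coprime_iff_not_dvd (by norm_num)).mpr (not_seventeen_dvd t)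
end

section
/- Let m ≥ 3, n = 2^m - 1, and let h satisfy 1 ≤ h ≤ (m-1)/2 if m is odd and 1 ≤ h ≤ (m-2)/2 if m is even. Then for any j with 1 ≤ j ≤ 2^h - 1 and any integers u, v with m-1 ≥ u > v ≥ 0, n does not divide j·2^u - j·2^v. Consequently the 2-cyclotomic coset of j modulo n has size m. -/
/-- The gcd of `2^m - 1` and `2^d - 1` divides `2^(gcd m d) - 1`. -/
lemma gcd_dvd_pow_gcd_sub_one (m d : ℕ) :
    Nat.gcd (2 ^ m - 1) (2 ^ d - 1) ∣ 2 ^ Nat.gcd m d - 1 := by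
  set G := Nat.gcd (2 ^ m - 1) (2 ^ d - 1) with hG
  have h2m : (2 : ZMod G) ^ m = 1 := by
    have h1 : G ∣ 2 ^ m - 1 := Nat.gcd_dvd_left _ _
    have hmod : (2 : ℕ) ^ m ≡ 1 [MOD G] :=
      (Nat.modEq_iff_dvd' (Nat.one_le_two_pow)).mpr h1 |>.symm
    have := (ZMod.natCast_eq_natCast_iff _ _ _).mpr hmod
    push_cast at this
    exact this
  have h2d : (2 : ZMod G) ^ d = 1 := by
    have h1 : G ∣ 2 ^ d - 1 := Nat.gcd_dvd_right _ _
    have hmod : (2 : ℕ) ^ d ≡ 1 [MOD G] :=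
      (Nat.modEq_iff_dvd' (Nat.one_le_two_pow)).mpr h1 |>.symm
    have := (ZMod.natCast_eq_natCast_iff _ _ _).mpr hmod
    push_cast at this
    exact this
  have hord : orderOf (2 : ZMod G) ∣ Nat.gcd m d :=
    Nat.dvd_gcd (orderOf_dvd_of_pow_eq_one h2m) (orderOf_dvd_of_pow_eq_one h2d)
  have h2g : (2 : ZMod G) ^ Nat.gcd m d = 1 := orderOf_dvd_iff_pow_eq_one.mp hord
  have hmod : (2 : ℕ) ^ Nat.gcd m d ≡ 1 [MOD G] := by
    have : ((2 ^ Nat.gcd m d : ℕ) : ZMod G) = ((1 : ℕ) : ZMod G) := by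
      push_cast; exact h2g
    exact (ZMod.natCast_eq_natCast_iff _ _ _).mp this
  exact (Nat.modEq_iff_dvd' (Nat.one_le_two_pow)).mp hmod.symm

lemma key_lemma (m h : ℕ) (hm : 3 ≤ m) (h1 : 1 ≤ h)
    (hodd : Odd m → h ≤ (m - 1) / 2) (heven : Even m → h ≤ (m - 2) / 2)
    (d : ℕ) (hd1 : 1 ≤ d) (hd2 : d ≤ m - 1)
    (j : ℕ) (hj1 : 1 ≤ j) (hj2 : j ≤ 2 ^ h - 1) :
    ¬ ((2 ^ m - 1) ∣ j * (2 ^ d - 1)) := by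
  intro hdvd
  set g := Nat.gcd m d with hg
  have hgm : g ∣ m := Nat.gcd_dvd_left _ _
  have hg1 : 1 ≤ g := Nat.gcd_pos_of_pos_left _ (by omega)
  have hgd : g ≤ d := Nat.le_of_dvd hd1 (Nat.gcd_dvd_right _ _)
  -- g is a proper divisor of m, so 2 * g ≤ m
  have h2g : 2 * g ≤ m := by
    obtain ⟨k, hk⟩ := hgm
    have hk2 : 2 ≤ k := by
      rcases k with _ | _ | k
      · omega
      · omega
      · omega
    nlinarith
  -- hence h ≤ m - g
  have hhm : h + g ≤ m := by
    rcases Nat.even_or_odd m with he | ho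
    · have := heven he
      obtain ⟨r, hr⟩ := he
      omega
    · have := hodd ho
      obtain ⟨r, hr⟩ := ho
      omega
  set n := 2 ^ m - 1 with hn
  set k := 2 ^ d - 1 with hk
  set G := Nat.gcd n k with hGdef
  have hGdvd : G ∣ 2 ^ g - 1 := gcd_dvd_pow_gcd_sub_one m d
  have hnpos : 0 < n := by
    have : (2:ℕ) ^ 3 ≤ 2 ^ m := Nat.pow_le_pow_right (by norm_num) hm
    omega
  have hGpos : 0 < G := Nat.gcd_pos_of_pos_left _ hnpos
  have hGle : G ≤ 2 ^ g - 1 := Nat.le_of_dvd (by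
    have : (2:ℕ)^1 ≤ 2 ^ g := Nat.pow_le_pow_right (by norm_num) hg1
    omega) hGdvd
  -- n / G divides j
  have hnG : n / G ∣ j := by
    have hcop : (n / G).Coprime (k / G) := Nat.coprime_div_gcd_div_gcd hGpos
    apply hcop.dvd_of_dvd_mul_right
    have hGn : G * (n / G) = n := Nat.mul_div_cancel' (Nat.gcd_dvd_left _ _)
    have hGk : G * (k / G) = k := Nat.mul_div_cancel' (Nat.gcd_dvd_right _ _)
    have : G * (n / G) ∣ (j * (k / G)) * G := by
      rw [hGn]
      have hjk : j * k = (j * (k / G)) * G := by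
        nth_rewrite 1 [← hGk]; ring
      rw [← hjk]; exact hdvd
    exact (Nat.mul_dvd_mul_iff_left hGpos).mp (by
      rwa [mul_comm ((j * (k / G))) G] at this)
  have hle : n / G ≤ j := Nat.le_of_dvd (by omega) hnG
  -- lower bound: 2^(m-g) ≤ n / G
  have hlow : 2 ^ (m - g) ≤ n / G := by
    calc 2 ^ (m - g) ≤ n / (2 ^ g - 1) := by
          rw [Nat.le_div_iff_mul_le (by
            have : (2:ℕ)^1 ≤ 2 ^ g := Nat.pow_le_pow_right (by norm_num) hg1
            omega)]
          have hpow : 2 ^ (m - g) * 2 ^ g = 2 ^ m := by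
            rw [← pow_add]; congr 1; omega
          have h2mg : (1:ℕ) ≤ 2 ^ (m - g) := Nat.one_le_two_pow
          have : 2 ^ (m - g) * (2 ^ g - 1) = 2 ^ m - 2 ^ (m - g) := by
            rw [Nat.mul_sub_one] ; omega
          omega
      _ ≤ n / G := Nat.div_le_div_left hGle hGpos
  -- but j < 2^h ≤ 2^(m-g), contradiction
  have hjlt : j < 2 ^ (m - g) := by
    have : (2:ℕ) ^ h ≤ 2 ^ (m - g) := Nat.pow_le_pow_right (by norm_num) (by omega)
    omega
  omega

theorem stmt7 (m h n : ℕ) (hm : 3 ≤ m) (h1 : 1 ≤ h)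
    (hodd : Odd m → h ≤ (m - 1) / 2) (heven : Even m → h ≤ (m - 2) / 2)
    (hn : n = 2 ^ m - 1) :
    ∀ j, 1 ≤ j → j ≤ 2 ^ h - 1 →
      (∀ u v, v < u → u ≤ m - 1 → ¬ (n ∣ (j * 2 ^ u - j * 2 ^ v))) ∧
      (Finset.image (fun s => j * 2 ^ s % n) (Finset.range m)).card = m := by
  intro j hj1 hj2
  have hnpos : 0 < n := by
    have : (2:ℕ) ^ 3 ≤ 2 ^ m := Nat.pow_le_pow_right (by norm_num) hm
    omega
  have main : ∀ u v, v < u → u ≤ m - 1 → ¬ (n ∣ (j * 2 ^ u - j * 2 ^ v)) := by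
    intro u v huv hu hdvd
    have hsplit : j * 2 ^ u - j * 2 ^ v = (j * (2 ^ (u - v) - 1)) * 2 ^ v := by
      have h2u : (2:ℕ) ^ u = 2 ^ v * 2 ^ (u - v) := by
        rw [← pow_add]; congr 1; omega
      have h1le : (1:ℕ) ≤ 2 ^ (u - v) := Nat.one_le_two_pow
      have e1 : j * 2 ^ u = (j * 2 ^ v) * 2 ^ (u - v) := by rw [h2u]; ring
      calc j * 2 ^ u - j * 2 ^ v
          = (j * 2 ^ v) * 2 ^ (u - v) - (j * 2 ^ v) * 1 := by rw [e1, mul_one]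
        _ = (j * 2 ^ v) * (2 ^ (u - v) - 1) := (Nat.mul_sub _ _ _).symm
        _ = (j * (2 ^ (u - v) - 1)) * 2 ^ v := by ring
    rw [hsplit] at hdvd
    have hcop : Nat.Coprime n (2 ^ v) := by
      apply Nat.Coprime.pow_right
      rw [hn]
      have h2 : ¬ (2 ∣ 2 ^ m - 1) := by
        have hd : (2:ℕ) ∣ 2 ^ m := dvd_pow_self 2 (by omega)
        have : (2:ℕ) ^ 3 ≤ 2 ^ m := Nat.pow_le_pow_right (by norm_num) hm
        omega
      exact Nat.coprime_comm.mp ((Nat.Prime.coprime_iff_not_dvd Nat.prime_two).mpr h2)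
    have hdvd' : n ∣ j * (2 ^ (u - v) - 1) := hcop.dvd_of_dvd_mul_right hdvd
    rw [hn] at hdvd'
    exact key_lemma m h hm h1 hodd heven (u - v) (by omega) (by omega) j hj1 hj2 hdvd'
  refine ⟨main, ?_⟩
  rw [Finset.card_image_of_injOn, Finset.card_range]
  have key : ∀ s t : ℕ, t < s → s < m → j * 2 ^ s % n = j * 2 ^ t % n → False := by
    intro s t hlt hs hst
    have hmle : j * 2 ^ t ≤ j * 2 ^ s :=
      Nat.mul_le_mul_left j (Nat.pow_le_pow_right (by norm_num) (by omega))
    have hdvd : n ∣ j * 2 ^ s - j * 2 ^ t := by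
      have : j * 2 ^ t ≡ j * 2 ^ s [MOD n] := hst.symm
      exact (Nat.modEq_iff_dvd' hmle).mp this
    exact main s t hlt (by omega) hdvd
  intro s hs t ht hst
  simp only [Finset.mem_coe, Finset.mem_range] at hs ht
  rcases lt_trichotomy s t with hc | hc | hc
  · exact absurd (key t s hc ht hst.symm) not_false
  · exact hc
  · exact absurd (key s t hc hs hst) not_false
end

section
/- Let m ≥ 3, n = 2^m - 1, and let h satisfy 1 ≤ h ≤ (m-1)/2 if m is odd and 1 ≤ h ≤ (m-2)/2 if m is even. Then for any two distinct odd integers i, j in {1, ..., 2^h - 1}, there is no u with 0 ≤ u ≤ m-1 such that i·2^u ≡ j (mod n). That is, distinct odd integers below 2^h lie in distinct 2-cyclotomic cosets modulo n. -/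
/-!
Multiplication by `2` modulo `2 ^ m - 1` is a cyclic shift of the `m`-bit binary expansion.
An odd `i < 2 ^ h` shifted left by `u` stays below `2 ^ m - 1` as long as `h + u ≤ m`, and is then
even, so it cannot be the odd `j`. If instead `h + u > m`, then `2h ≤ m` forces `h ≤ m - u`, and
shifting the congruence by `m - u` gives `j * 2 ^ (m - u) ≡ i` with the roles of `i` and `j` swapped.
-/

namespace Nat

lemma pos_of_odd_of_lt_two_pow {i h : ℕ} (hi : Odd i) (hih : i < 2 ^ h) : 0 < h :=
  pos_of_ne_zero fun h0 ↦ by simp_all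

lemma mul_two_pow_lt_two_pow_sub_one {i h u m : ℕ} (hi : i < 2 ^ h) (hu : 0 < u)
    (hhu : h + u ≤ m) : i * 2 ^ u < 2 ^ m - 1 := by
  have hshift : i * 2 ^ u + 2 ^ u ≤ 2 ^ (h + u) := by
    rw [pow_add, ← succ_mul]
    exact Nat.mul_le_mul_right _ hi
  have htwo : 2 ≤ 2 ^ u := Nat.le_self_pow hu.ne' 2
  have hm : 2 ^ (h + u) ≤ 2 ^ m := Nat.pow_le_pow_right two_pos hhu
  omega

lemma mul_two_pow_sub_modEq {i j u m : ℕ} (hu : u ≤ m) (hij : i * 2 ^ u ≡ j [MOD 2 ^ m - 1]) :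
    j * 2 ^ (m - u) ≡ i [MOD 2 ^ m - 1] :=
  calc j * 2 ^ (m - u) ≡ i * 2 ^ u * 2 ^ (m - u) [MOD 2 ^ m - 1] := (hij.mul_right _).symm
    _ = i * 2 ^ m := by rw [mul_assoc, ← pow_add, Nat.add_sub_cancel' hu]
    _ ≡ i * 1 [MOD 2 ^ m - 1] := (modEq_sub Nat.one_le_two_pow).mul_left i
    _ = i := mul_one i

lemma not_mul_two_pow_modEq_of_odd {i j h u m : ℕ} (hj : Odd j) (hi : i < 2 ^ h)
    (hjh : j < 2 ^ h) (hu : 0 < u) (hhu : h + u ≤ m) : ¬ i * 2 ^ u ≡ j [MOD 2 ^ m - 1] := by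
  intro hij
  have hj_lt : j < 2 ^ m - 1 := by
    have := Nat.pow_lt_pow_right one_lt_two (show h < m by omega)
    omega
  have heq := hij.eq_of_lt_of_lt (mul_two_pow_lt_two_pow_sub_one hi hu hhu) hj_lt
  have heven : Even (i * 2 ^ u) := (even_pow.2 ⟨even_two, hu.ne'⟩).mul_left i
  exact not_even_iff_odd.2 hj (heq ▸ heven)

theorem eq_of_odd_of_mul_two_pow_modEq {i j h u m : ℕ} (hm : 2 * h ≤ m) (hi : Odd i)
    (hj : Odd j) (hih : i < 2 ^ h) (hjh : j < 2 ^ h) (hu : u < m)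
    (hij : i * 2 ^ u ≡ j [MOD 2 ^ m - 1]) : i = j := by
  rcases eq_or_ne u 0 with rfl | hu0
  · have hh := pos_of_odd_of_lt_two_pow hi hih
    have hpow := Nat.pow_lt_pow_right one_lt_two (show h < m by omega)
    exact (by simpa using hij : i ≡ j [MOD 2 ^ m - 1]).eq_of_lt_of_lt (by omega) (by omega)
  by_cases hhu : h + u ≤ m
  · exact absurd hij (not_mul_two_pow_modEq_of_odd hj hih hjh (pos_of_ne_zero hu0) hhu)
  · exact absurd (mul_two_pow_sub_modEq hu.le hij)
      (not_mul_two_pow_modEq_of_odd hi hjh hih (by omega) (by omega))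

end Nat

theorem stmt8_general (m h n : ℕ)
    (hodd : Odd m → h ≤ (m - 1) / 2) (heven : Even m → h ≤ (m - 2) / 2)
    (hn : n = 2 ^ m - 1) :
    ∀ i j : ℕ, Odd i → Odd j → 1 ≤ i → i ≤ 2 ^ h - 1 → 1 ≤ j → j ≤ 2 ^ h - 1 →
      i ≠ j → ¬ ∃ u, u ≤ m - 1 ∧ i * 2 ^ u ≡ j [MOD n] := by
  rintro i j hi hj - hih - hjh hij ⟨u, hu, hcong⟩
  have h2h : 2 * h ≤ m := by
    rcases Nat.even_or_odd m with hme | hmo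
    · have := heven hme; omega
    · have := hodd hmo; omega
  have hpow : 1 ≤ 2 ^ h := Nat.one_le_two_pow
  have hih' : i < 2 ^ h := by omega
  have hh := Nat.pos_of_odd_of_lt_two_pow hi hih'
  subst hn
  exact hij (Nat.eq_of_odd_of_mul_two_pow_modEq h2h hi hj hih' (by omega) (by omega) hcong)

theorem stmt8 (m h n : ℕ) (hm : 3 ≤ m) (h1 : 1 ≤ h)
    (hodd : Odd m → h ≤ (m - 1) / 2) (heven : Even m → h ≤ (m - 2) / 2)
    (hn : n = 2 ^ m - 1) :
    ∀ i j : ℕ, Odd i → Odd j → 1 ≤ i → i ≤ 2 ^ h - 1 → 1 ≤ j → j ≤ 2 ^ h - 1 →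
      i ≠ j → ¬ ∃ u, u ≤ m - 1 ∧ i * 2 ^ u ≡ j [MOD n] :=
  stmt8_general m h n hodd heven hn
end

section
/- Let m be odd with m = 4h + 1 (so h = (m-1)/4, requiring m ≡ 1 mod 4), n = 2^m - 1, and B = {i + 2^{2h} : 0 ≤ i ≤ 2^h - 1}. Then for every j ∈ B and every u with 1 ≤ u ≤ m - 1, n does not divide j(2^u - 1). Consequently, the 2-cyclotomic coset of j modulo n has size m. -/
set_option maxHeartbeats 1600000 in
theorem stmt11 (m h n : ℕ) (hm : m = 4 * h + 1) (hn : n = 2 ^ m - 1) :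
    ∀ i ≤ 2 ^ h - 1,
      (∀ u, 1 ≤ u → u ≤ m - 1 → ¬ (n ∣ (i + 2 ^ (2 * h)) * (2 ^ u - 1))) ∧
      (Finset.image (fun s => (i + 2 ^ (2 * h)) * 2 ^ s % n)
        (Finset.range m)).card = m := by
  intro i hi
  set j := i + 2 ^ (2 * h) with hj
  have key : ∀ u, 1 ≤ u → u ≤ m - 1 → ¬ (n ∣ j * (2 ^ u - 1)) := by
    have small : ∀ u, 1 ≤ u → u ≤ 2 * h → ¬ (n ∣ j * (2 ^ u - 1)) := by
      intro u hu1 hu2 hdvd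
      have hh1 : 1 ≤ h := by omega
      have ha2 : 2 ≤ 2 ^ h := by
        calc 2 = 2 ^ 1 := by norm_num
        _ ≤ 2 ^ h := Nat.pow_le_pow_right (by norm_num) hh1
      set a := 2 ^ h with hadef
      have h2h : 2 ^ (2 * h) = a ^ 2 := by rw [hadef, ← pow_mul, mul_comm]
      have h4h : 2 ^ m = 2 * a ^ 4 := by
        rw [hm, hadef, ← pow_mul, pow_succ, mul_comm h 4, mul_comm]
      have hu2' : 2 ^ u ≤ a ^ 2 := by
        rw [← h2h]; exact Nat.pow_le_pow_right (by norm_num) hu2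
      have h2u1 : 1 ≤ 2 ^ u := Nat.one_le_two_pow
      have hjle : j ≤ a ^ 2 + a - 1 := by
        rw [hj, h2h]; omega
      have hpos : 0 < j * (2 ^ u - 1) := by
        have : 0 < j := by rw [hj, h2h]; positivity
        have : 0 < 2 ^ u - 1 := by
          have : 2 ≤ 2 ^ u := by
            calc 2 = 2 ^ 1 := by norm_num
            _ ≤ 2 ^ u := Nat.pow_le_pow_right (by norm_num) hu1
          omega
        positivity
      have hlt : j * (2 ^ u - 1) < n := by
        have hle : j * (2 ^ u - 1) ≤ (a ^ 2 + a - 1) * (a ^ 2 - 1) :=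
          Nat.mul_le_mul hjle (by omega)
        have hbound : (a ^ 2 + a - 1) * (a ^ 2 - 1) < 2 * a ^ 4 - 1 := by
          have e1 : a ^ 2 + a - 1 = a ^ 2 + a - 1 := rfl
          zify [show 1 ≤ a ^ 2 + a by nlinarith, show 1 ≤ a ^ 2 by nlinarith,
                show 1 ≤ 2 * a ^ 4 by nlinarith]
          nlinarith [sq_nonneg ((a:ℤ) - 1), sq_nonneg (a:ℤ)]
        rw [hn, h4h]
        omega
      exact absurd (Nat.le_of_dvd hpos hdvd) (not_le.mpr hlt)
    intro u hu1 hu2 hdvd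
    by_cases hc : u ≤ 2 * h
    · exact small u hu1 hc hdvd
    · have hb1 : 1 ≤ m - u := by omega
      have hb2 : m - u ≤ 2 * h := by omega
      apply small (m - u) hb1 hb2
      -- n ∣ j * (2^(m-u) - 1)
      have hd1' : n ∣ j * 2 ^ (m - u) * (2 ^ u - 1) := by
        have h0 := hdvd.mul_left (2 ^ (m - u))
        have heq : 2 ^ (m - u) * (j * (2 ^ u - 1)) = j * 2 ^ (m - u) * (2 ^ u - 1) := by ring
        rwa [heq] at h0
      have hd2 : n ∣ j * (2 ^ m - 1) := by
        rw [hn]; exact Dvd.dvd.mul_left dvd_rfl j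
      have hE : j * 2 ^ (m - u) * (2 ^ u - 1) + j * (2 ^ (m - u) - 1) = j * (2 ^ m - 1) := by
        have hx : 2 ^ (m - u) * 2 ^ u = 2 ^ m := by rw [← pow_add]; congr 1; omega
        have h1u : 1 ≤ 2 ^ u := Nat.one_le_two_pow
        have h1mu : 1 ≤ 2 ^ (m - u) := Nat.one_le_two_pow
        have h1m : 1 ≤ 2 ^ m := Nat.one_le_two_pow
        have hle : 2 ^ (m - u) ≤ 2 ^ m := Nat.pow_le_pow_right (by norm_num) (by omega)
        have e1 : 2 ^ (m - u) * (2 ^ u - 1) = 2 ^ m - 2 ^ (m - u) := by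
          rw [Nat.mul_sub_left_distrib, hx, Nat.mul_one]
        have e2 : j * 2 ^ (m - u) * (2 ^ u - 1) = j * (2 ^ m - 2 ^ (m - u)) := by
          rw [mul_assoc, e1]
        rw [e2, ← Nat.mul_add]
        congr 1
        omega
      have := Nat.dvd_sub hd2 hd1'
      rwa [← hE, Nat.add_sub_cancel_left] at this
  refine ⟨key, ?_⟩
  have main : ∀ s t, s < t → t < m → j * 2 ^ s % n ≠ j * 2 ^ t % n := by
    intro s t hlt htm hst
    have hle : j * 2 ^ s ≤ j * 2 ^ t :=
      Nat.mul_le_mul_left _ (Nat.pow_le_pow_right (by norm_num) hlt.le)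
    have hd : n ∣ j * 2 ^ t - j * 2 ^ s := (Nat.modEq_iff_dvd' hle).mp hst
    have hx : 2 ^ (t - s) - 1 + 1 = 2 ^ (t - s) :=
      Nat.sub_add_cancel Nat.one_le_two_pow
    have E : j * (2 ^ (t - s) - 1) * 2 ^ s + j * 2 ^ s = j * 2 ^ t := by
      calc j * (2 ^ (t - s) - 1) * 2 ^ s + j * 2 ^ s
          = j * ((2 ^ (t - s) - 1) + 1) * 2 ^ s := by ring
        _ = j * 2 ^ (t - s) * 2 ^ s := by rw [hx]
        _ = j * 2 ^ t := by rw [mul_assoc, ← pow_add]; congr 2; omega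
    have hd2 : n ∣ j * (2 ^ (t - s) - 1) * 2 ^ s := by
      rwa [← E, Nat.add_sub_cancel] at hd
    have hnodd : Odd n := by
      rw [hn]
      refine Nat.Even.sub_odd Nat.one_le_two_pow ?_ odd_one
      exact (Nat.even_pow' (by omega)).mpr even_two
    have hcop : Nat.Coprime n (2 ^ s) :=
      Nat.Coprime.pow_right s (Nat.coprime_two_right.mpr hnodd)
    have hd3 : n ∣ j * (2 ^ (t - s) - 1) := Nat.Coprime.dvd_of_dvd_mul_right hcop hd2
    exact key (t - s) (by omega) (by omega) hd3
  have hinj : Set.InjOn (fun s => j * 2 ^ s % n) (Finset.range m) := by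
    intro s hs t ht hst
    simp only [Finset.coe_range, Set.mem_Iio] at hs ht
    rcases lt_trichotomy s t with h | h | h
    · exact absurd hst (main s t h ht)
    · exact h
    · exact absurd hst.symm (main t s h hs)
  rw [Finset.card_image_of_injOn hinj, Finset.card_range]
end

section
/- Let m ≡ 1 (mod 4), m ≥ 9, h = (m-1)/4, n = 2^m - 1, and B = {i + 2^{2h} : 0 ≤ i ≤ 2^h - 1}. Then for any two distinct i, j ∈ B, there is no u with 0 ≤ u ≤ m-1 such that i·2^u ≡ j (mod n). -/
theorem stmt12 (m h n : ℕ) (hm4 : m % 4 = 1) (hm9 : 9 ≤ m)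
    (hh : h = (m - 1) / 4) (hn : n = 2 ^ m - 1) :
    ∀ i0 ≤ 2 ^ h - 1, ∀ j0 ≤ 2 ^ h - 1, i0 ≠ j0 →
      ¬ ∃ u, u ≤ m - 1 ∧
        (i0 + 2 ^ (2 * h)) * 2 ^ u ≡ j0 + 2 ^ (2 * h) [MOD n] := by
  intro i0 hi0 j0 hj0 hne
  rintro ⟨u, hu, hmod⟩
  have hh2 : 2 ≤ h := by omega
  have hm : m = 4 * h + 1 := by omega
  subst hn
  subst hm
  have h1 : (1:ℕ) ≤ 2 ^ h := Nat.one_le_two_pow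
  have hi0' : i0 < 2 ^ h := by omega
  have hj0' : j0 < 2 ^ h := by omega
  have hAP : 2 ^ h ≤ 2 ^ (2*h) := Nat.pow_le_pow_right (by norm_num) (by omega)
  have hP4 : 4 ≤ 2 ^ (2*h) := by
    calc (4:ℕ) = 2^2 := by norm_num
    _ ≤ 2^(2*h) := Nat.pow_le_pow_right (by norm_num) (by omega)
  have hsplit : 2 ^ (4*h+1) = 2 * (2^(2*h) * 2^(2*h)) := by
    rw [show 4*h+1 = 1 + (2*h + 2*h) by ring, pow_add, pow_add, pow_one]
  have hQQ : 4 * 2^(2*h) ≤ 2^(2*h) * 2^(2*h) := Nat.mul_le_mul_right _ hP4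
  -- j < n
  have hjlt : j0 + 2^(2*h) < 2^(4*h+1) - 1 := by omega
  rcases Nat.lt_or_ge u (2*h+1) with hcase | hcase
  · -- u ≤ 2h : no wraparound
    rcases Nat.eq_zero_or_pos u with hu0 | hu1
    · subst hu0
      simp only [pow_zero, mul_one] at hmod
      have := hmod.eq_of_lt_of_lt (by omega) (by omega)
      omega
    · have hule : 2^u ≤ 2^(2*h) := Nat.pow_le_pow_right (by norm_num) (by omega)
      have h2u : 2 ≤ 2^u := by
        calc (2:ℕ) = 2^1 := by norm_num
        _ ≤ 2^u := Nat.pow_le_pow_right (by norm_num) hu1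
      have key : (i0 + 2^(2*h)) * 2^u + 2^(2*h) ≤ 2^(4*h+1) := by
        calc (i0 + 2^(2*h)) * 2^u + 2^(2*h)
            ≤ (2*2^(2*h) - 1) * 2^(2*h) + 2^(2*h) :=
              Nat.add_le_add_right (Nat.mul_le_mul (by omega) hule) _
          _ = 2*(2^(2*h)*2^(2*h)) - 1*2^(2*h) + 2^(2*h) := by
              rw [Nat.sub_mul]; ring_nf
          _ ≤ 2*(2^(2*h)*2^(2*h)) := by omega
          _ = 2^(4*h+1) := hsplit.symm
      have heq := hmod.eq_of_lt_of_lt (by omega) (by omega)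
      have hge : (i0 + 2^(2*h)) * 2 ≤ (i0 + 2^(2*h)) * 2^u :=
        Nat.mul_le_mul_left _ h2u
      omega
  · -- u ≥ 2h+1 : wraparound
    set e := 4*h+1 - u with he
    have he1 : 1 ≤ e := by omega
    have he2 : e ≤ 2*h := by omega
    have h2e : 2 ≤ 2^e := by
      calc (2:ℕ) = 2^1 := by norm_num
        _ ≤ 2^e := Nat.pow_le_pow_right (by norm_num) he1
    obtain ⟨a, b, hdm, hblt⟩ : ∃ a b, 2^e * a + b = i0 + 2^(2*h) ∧ b < 2^e :=
      ⟨(i0 + 2^(2*h)) / 2^e, (i0 + 2^(2*h)) % 2^e, Nat.div_add_mod _ _,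
        Nat.mod_lt _ (by omega)⟩
    have hexp : 2^e * 2^u = 2^(4*h+1) := by
      rw [← pow_add]; congr 1; omega
    have hstep : (i0 + 2^(2*h)) * 2^u = a * 2^(4*h+1) + b * 2^u := by
      rw [← hdm, ← hexp]; ring
    have hone : (1:ℕ) ≡ 2^(4*h+1) [MOD 2^(4*h+1) - 1] :=
      (Nat.modEq_iff_dvd' Nat.one_le_two_pow).mpr dvd_rfl
    have hcong : a + b * 2^u ≡ j0 + 2^(2*h) [MOD 2^(4*h+1) - 1] := by
      calc a + b * 2^u = a * 1 + b * 2^u := by ring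
        _ ≡ a * 2^(4*h+1) + b * 2^u [MOD 2^(4*h+1) - 1] :=
            Nat.ModEq.add_right _ (hone.mul_left a)
        _ = (i0 + 2^(2*h)) * 2^u := hstep.symm
        _ ≡ j0 + 2^(2*h) [MOD 2^(4*h+1) - 1] := hmod
    have halt : a < 2^(2*h) := by
      have h2a : 2 * a ≤ 2^e * a := Nat.mul_le_mul_right a h2e
      omega
    have h2u : 2 * 2^(2*h) ≤ 2^u := by
      calc 2 * 2^(2*h) = 2^(2*h+1) := by rw [pow_succ]; ring
        _ ≤ 2^u := Nat.pow_le_pow_right (by norm_num) hcase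
    have hbu : b * 2^u ≤ 2^(4*h+1) - 2^u := by
      calc b * 2^u ≤ (2^e - 1) * 2^u := Nat.mul_le_mul_right _ (by omega)
        _ = 2^e * 2^u - 1 * 2^u := by rw [Nat.sub_mul]
        _ = 2^(4*h+1) - 2^u := by rw [hexp, one_mul]
    have h2un : 2^u ≤ 2^(4*h+1) := by
      rw [← hexp]; exact Nat.le_mul_of_pos_left _ (by omega)
    have heq := hcong.eq_of_lt_of_lt (by omega) (by omega)
    rcases Nat.eq_zero_or_pos b with hb0 | hb1
    · rw [hb0, zero_mul, add_zero] at heq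
      omega
    · have hgeu : 2^u ≤ b * 2^u := Nat.le_mul_of_pos_left _ hb1
      omega
end

section
/- Let m ≡ 1 (mod 4), m ≥ 9, h = (m-1)/4, n = 2^m - 1. Let i with 0 ≤ i ≤ 2^h - 1 and let j be odd with 1 ≤ j ≤ 2^h - 1. Then there exists u with 0 ≤ u ≤ m - 1 and j·2^u ≡ i + 2^{2h} (mod n) if and only if (i, j) = (0, 1). -/
theorem stmt13 (m h n : ℕ) (hm4 : m % 4 = 1) (hm9 : 9 ≤ m)
    (hh : h = (m - 1) / 4) (hn : n = 2 ^ m - 1)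
    (i j : ℕ) (hi : i ≤ 2 ^ h - 1) (hj : Odd j) (hj1 : 1 ≤ j)
    (hj2 : j ≤ 2 ^ h - 1) :
    (∃ u, u ≤ m - 1 ∧ j * 2 ^ u ≡ i + 2 ^ (2 * h) [MOD n]) ↔ (i = 0 ∧ j = 1) := by
  have hm : m = 4 * h + 1 := by omega
  subst hm
  subst hn
  have hh2 : 2 ≤ h := by omega
  have hp1 : (1:ℕ) ≤ 2 ^ h := Nat.one_le_two_pow
  have hi' : i < 2 ^ h := by omega
  have hj' : j < 2 ^ h := by omega
  have h2h : 2 ^ h ≤ 2 ^ (2 * h) := Nat.pow_le_pow_right (by norm_num) (by omega)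
  have h2h1 : 2 ^ (2 * h + 1) = 2 * 2 ^ (2 * h) := by rw [pow_succ]; ring
  have h2h4 : 2 ^ (2 * h + 1) ≤ 2 ^ (4 * h) := Nat.pow_le_pow_right (by norm_num) (by omega)
  have h4h : 2 ^ (4 * h + 1) = 2 * 2 ^ (4 * h) := by rw [pow_succ]; ring
  have h4h1 : (1:ℕ) ≤ 2 ^ (4 * h) := Nat.one_le_two_pow
  have hb1 : i + 2 ^ (2 * h) < 2 ^ (4 * h + 1) - 1 := by omega
  constructor
  · rintro ⟨u, hu, hc⟩
    have hu' : u ≤ 4 * h := by omega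
    rcases le_or_gt u (3 * h + 1) with hcase | hcase
    · -- small u : both sides below the modulus
      have e1 : 2 ^ h * 2 ^ (3 * h + 1) = 2 ^ (4 * h + 1) := by
        rw [← pow_add]; congr 1; omega
      have e2 : (2:ℕ) ≤ 2 ^ (3 * h + 1) := by
        have : (2:ℕ)^1 ≤ 2 ^ (3 * h + 1) := Nat.pow_le_pow_right (by norm_num) (by omega)
        simpa using this
      have hmono : 2 ^ u ≤ 2 ^ (3 * h + 1) := Nat.pow_le_pow_right (by norm_num) hcase
      have hlt : j * 2 ^ u < 2 ^ (4 * h + 1) - 1 := by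
        have : j * 2 ^ u ≤ (2 ^ h - 1) * 2 ^ (3 * h + 1) :=
          Nat.mul_le_mul (by omega) hmono
        have e3 : (2 ^ h - 1) * 2 ^ (3 * h + 1) = 2 ^ (4 * h + 1) - 2 ^ (3 * h + 1) := by
          rw [Nat.sub_mul, e1, one_mul]
        omega
      have heq : j * 2 ^ u = i + 2 ^ (2 * h) := by
        have := hc
        unfold Nat.ModEq at this
        rwa [Nat.mod_eq_of_lt hlt, Nat.mod_eq_of_lt hb1] at this
      -- u ≤ 2h
      have hu2 : u ≤ 2 * h := by
        have h2u : 2 ^ u ≤ j * 2 ^ u := Nat.le_mul_of_pos_left _ (by omega)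
        have : 2 ^ u < 2 ^ (2 * h + 1) := by omega
        have := (Nat.pow_lt_pow_iff_right (a := 2) (by norm_num)).mp this
        omega
      -- u ≥ h + 1
      have hu1 : h + 1 ≤ u := by
        by_contra hcon
        push_neg at hcon
        have hb : j * 2 ^ u ≤ (2 ^ h - 1) * 2 ^ h :=
          Nat.mul_le_mul (by omega) (Nat.pow_le_pow_right (by norm_num) (by omega))
        have e5 : 2 ^ h * 2 ^ h = 2 ^ (2 * h) := by rw [← pow_add]; congr 1; omega
        have e6 : (2 ^ h - 1) * 2 ^ h = 2 ^ (2 * h) - 2 ^ h := by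
          rw [Nat.sub_mul, e5, one_mul]
        omega
      -- 2^u divides i, but i < 2^u, so i = 0
      have hdvd : 2 ^ u ∣ i := by
        have d1 : 2 ^ u ∣ j * 2 ^ u := Dvd.intro_left j rfl
        have d2 : 2 ^ u ∣ 2 ^ (2 * h) := pow_dvd_pow 2 hu2
        have d3 : 2 ^ u ∣ i + 2 ^ (2 * h) := heq ▸ d1
        have := Nat.dvd_sub d3 d2
        simpa using this
      have hiu : i < 2 ^ u := lt_of_lt_of_le hi'
        (Nat.pow_le_pow_right (by norm_num) (by omega))
      have hi0 : i = 0 := Nat.eq_zero_of_dvd_of_lt hdvd hiu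
      subst hi0
      rw [zero_add] at heq
      have epow : 2 ^ (2 * h) = 2 ^ (2 * h - u) * 2 ^ u := by
        rw [← pow_add]; congr 1; omega
      have hjpow : j = 2 ^ (2 * h - u) := by
        have := heq.trans epow
        exact Nat.eq_of_mul_eq_mul_right (by positivity) this
      have hju : 2 * h - u = 0 := by
        by_contra hne
        have : (2:ℕ) ∣ 2 ^ (2 * h - u) := dvd_pow_self 2 hne
        rw [← hjpow] at this
        rw [Nat.odd_iff] at hj
        omega
      rw [hju, pow_zero] at hjpow
      exact ⟨rfl, hjpow⟩
    · -- large u : multiply by 2^(m - u)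
      exfalso
      set v := 4 * h + 1 - u with hv
      have hv1 : 1 ≤ v := by omega
      have hv2 : v ≤ h - 1 := by omega
      have hc2 : j * 2 ^ u * 2 ^ v ≡ (i + 2 ^ (2 * h)) * 2 ^ v
          [MOD 2 ^ (4 * h + 1) - 1] := hc.mul_right _
      have e1 : j * 2 ^ u * 2 ^ v = j * 2 ^ (4 * h + 1) := by
        rw [mul_assoc, ← pow_add]; congr 2; omega
      rw [e1] at hc2
      have e2 : j * 2 ^ (4 * h + 1) ≡ j * 1 [MOD 2 ^ (4 * h + 1) - 1] := by
        refine Nat.ModEq.mul_left j ?_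
        exact ((Nat.modEq_iff_dvd' (by omega)).mpr dvd_rfl).symm
      have hc3 : j ≡ (i + 2 ^ (2 * h)) * 2 ^ v [MOD 2 ^ (4 * h + 1) - 1] := by
        have := (e2.symm.trans hc2)
        simpa using this
      -- both sides below modulus
      have hvh : 2 ^ v ≤ 2 ^ (h - 1) := Nat.pow_le_pow_right (by norm_num) hv2
      have e4 : 2 ^ (2 * h + 1) * 2 ^ (h - 1) = 2 ^ (3 * h) := by
        rw [← pow_add]; congr 1; omega
      have h3h : 2 ^ (3 * h) ≤ 2 ^ (4 * h) := Nat.pow_le_pow_right (by norm_num) (by omega)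
      have hrb : (i + 2 ^ (2 * h)) * 2 ^ v < 2 ^ (4 * h + 1) - 1 := by
        have : (i + 2 ^ (2 * h)) * 2 ^ v ≤ 2 ^ (2 * h + 1) * 2 ^ (h - 1) :=
          Nat.mul_le_mul (by omega) hvh
        omega
      have hjb : j < 2 ^ (4 * h + 1) - 1 := by omega
      have heq : j = (i + 2 ^ (2 * h)) * 2 ^ v := by
        have := hc3
        unfold Nat.ModEq at this
        rwa [Nat.mod_eq_of_lt hjb, Nat.mod_eq_of_lt hrb] at this
      have : 2 ^ (2 * h) ≤ (i + 2 ^ (2 * h)) * 2 ^ v :=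
        Nat.le_mul_of_pos_right _ (by positivity) |>.trans'
          (by omega)
      omega
  · rintro ⟨rfl, rfl⟩
    exact ⟨2 * h, by omega, by simpa using Nat.ModEq.refl _⟩
end

section
/- Let q ≥ 2, m ≥ 3 odd, n = q^m - 1, and let h satisfy 3 ≤ h ≤ (m-1)/2. For any t ≥ 1 and any tuple 0 < i_1 < i_2 < ... < i_t ≤ h-1, let i = 1 + q^{i_1} + ... + q^{i_t}. Then for every u with 1 ≤ u ≤ m-1, n does not divide i(q^u - 1); consequently the q-cyclotomic coset of i modulo n has size m. -/
/-!
If `q ^ m - 1` divides `i * (q ^ u - 1)` with `0 < u < m`, it also divides `i * (q ^ d - 1)` for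
`d = gcd u m`, since `gcd (q ^ u - 1) (q ^ m - 1) = q ^ d - 1`. Comparing sizes then forces
`q ^ (m - d) ≤ i`. As `m` is odd, the proper divisor `d` is at most `m / 3`, whereas
`i = 1 + q ^ i₁ + ⋯ + q ^ iₜ ≤ q ^ h` with `h ≤ (m - 1) / 2 < m - d`. Since `q` is a unit modulo
`q ^ m - 1`, the first `m` elements of the cyclotomic coset of `i` are then pairwise distinct.
-/

theorem pow_sub_one_dvd_mul_pow_gcd_sub_one {q m u i : ℕ} (h : q ^ m - 1 ∣ i * (q ^ u - 1)) :
    q ^ m - 1 ∣ i * (q ^ Nat.gcd u m - 1) := by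
  rw [← Nat.pow_sub_one_gcd_pow_sub_one, ← Nat.gcd_mul_left]
  exact Nat.dvd_gcd h (dvd_mul_left _ _)

theorem pow_sub_le_of_pow_sub_one_dvd_mul {q m d i : ℕ} (hq : 2 ≤ q) (hd : 0 < d) (hdm : d ≤ m)
    (hi : 0 < i) (h : q ^ m - 1 ∣ i * (q ^ d - 1)) : q ^ (m - d) ≤ i := by
  have hqd : 0 < q ^ d - 1 := Nat.sub_pos_of_lt (Nat.one_lt_pow hd.ne' hq)
  refine Nat.le_of_mul_le_mul_right ?_ hqd
  calc q ^ (m - d) * (q ^ d - 1) = q ^ m - q ^ (m - d) := by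
        rw [Nat.mul_sub_one, ← pow_add, Nat.sub_add_cancel hdm]
    _ ≤ q ^ m - 1 := Nat.sub_le_sub_left (Nat.one_le_pow _ _ (by omega)) _
    _ ≤ i * (q ^ d - 1) := Nat.le_of_dvd (Nat.mul_pos hi hqd) h

theorem three_mul_le_of_dvd_of_lt_of_odd {d m : ℕ} (hdvd : d ∣ m) (hlt : d < m) (hm : Odd m) :
    3 * d ≤ m := by
  obtain ⟨k, rfl⟩ := hdvd
  have hk2 : k ≠ 2 := by
    rintro rfl
    exact absurd (Nat.odd_mul.mp hm).2 (by decide)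
  have hk : 3 ≤ k := by
    rcases k with _ | _ | _ | k <;> simp_all
  nlinarith

theorem not_pow_sub_one_dvd_mul_pow_sub_one {q m i u : ℕ} (hq : 2 ≤ q) (hi : 0 < i)
    (hsmall : ∀ d, d ∣ m → d < m → i < q ^ (m - d)) (hu : 0 < u) (hum : u < m) :
    ¬ q ^ m - 1 ∣ i * (q ^ u - 1) := fun h => by
  have hgcd : Nat.gcd u m ≤ u := Nat.gcd_le_left m hu
  exact (hsmall _ (Nat.gcd_dvd_right u m) (by omega)).not_ge
    (pow_sub_le_of_pow_sub_one_dvd_mul hq (Nat.gcd_pos_of_pos_left m hu) (by omega) hi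
      (pow_sub_one_dvd_mul_pow_gcd_sub_one h))

theorem coprime_pow_sub_one {q m : ℕ} (hq : 0 < q) (hm : m ≠ 0) : Nat.Coprime q (q ^ m - 1) :=
  Nat.Coprime.coprime_dvd_left (dvd_pow_self q hm)
    ((Nat.coprime_self_sub_right (Nat.one_le_pow _ _ hq)).mpr (Nat.coprime_one_right _))

theorem mul_pow_mod_ne_of_lt {q n i m s t : ℕ} (hq : 0 < q) (hcop : Nat.Coprime q n)
    (hcoset : ∀ u, 0 < u → u < m → ¬ n ∣ i * (q ^ u - 1)) (hst : s < t) (ht : t < m) :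
    i * q ^ s % n ≠ i * q ^ t % n := by
  intro heq
  have hcancel : q ^ s * i ≡ q ^ s * (i * q ^ (t - s)) [MOD n] := by
    rw [mul_left_comm, ← pow_add, Nat.add_sub_cancel' hst.le, mul_comm]
    exact heq
  have hmod : i ≡ i * q ^ (t - s) [MOD n] :=
    Nat.ModEq.cancel_left_of_coprime (Nat.Coprime.pow_left s hcop).symm hcancel
  have hle : i ≤ i * q ^ (t - s) :=
    Nat.le_mul_of_pos_right i (pow_pos hq _)
  refine hcoset (t - s) (by omega) (by omega) ?_
  rw [Nat.mul_sub_one]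
  exact (Nat.modEq_iff_dvd' hle).mp hmod

theorem card_image_mul_pow_mod {q n i m : ℕ} (hq : 0 < q) (hcop : Nat.Coprime q n)
    (hcoset : ∀ u, 0 < u → u < m → ¬ n ∣ i * (q ^ u - 1)) :
    (Finset.image (fun s => i * q ^ s % n) (Finset.range m)).card = m := by
  rw [Finset.card_image_of_injOn, Finset.card_range]
  intro s hs t ht heq
  simp only [Finset.coe_range, Set.mem_Iio] at hs ht
  by_contra hne
  rcases Nat.lt_or_gt_of_ne hne with hlt | hlt
  · exact mul_pow_mod_ne_of_lt hq hcop hcoset hlt ht heq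
  · exact mul_pow_mod_ne_of_lt hq hcop hcoset hlt hs heq.symm

theorem one_add_sum_pow_le_pow {ι : Type*} [Fintype ι] {q h : ℕ} {c : ι → ℕ} (hq : 2 ≤ q)
    (hc : Function.Injective c) (hch : ∀ l, c l < h) : 1 + ∑ l, q ^ c l ≤ q ^ h := by
  rw [← Finset.sum_image fun x _ y _ hxy => hc hxy]
  exact Nat.one_add_le_iff.mpr <| Nat.geomSum_lt hq fun k hk => by
    obtain ⟨l, -, rfl⟩ := Finset.mem_image.mp hk
    exact hch l

theorem stmt16_general (q m h n : ℕ) (hq : 2 ≤ q) (hmo : Odd m)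
    (hh3 : 3 ≤ h) (hh : h ≤ (m - 1) / 2) (hn : n = q ^ m - 1)
    (t : ℕ) (c : Fin t → ℕ) (hc : StrictMono c)
    (hch : ∀ l, c l ≤ h - 1) :
    (∀ u, 1 ≤ u → u ≤ m - 1 →
        ¬ (n ∣ (1 + ∑ l, q ^ c l) * (q ^ u - 1))) ∧
    (Finset.image (fun s => (1 + ∑ l, q ^ c l) * q ^ s % n)
      (Finset.range m)).card = m := by
  subst hn
  have hi : 1 + ∑ l, q ^ c l ≤ q ^ h :=
    one_add_sum_pow_le_pow hq hc.injective fun l => by have := hch l; omega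
  have hsmall : ∀ d, d ∣ m → d < m → 1 + ∑ l, q ^ c l < q ^ (m - d) := fun d hdvd hlt => by
    have := three_mul_le_of_dvd_of_lt_of_odd hdvd hlt hmo
    exact hi.trans_lt (Nat.pow_lt_pow_right hq (by omega))
  have hcoset : ∀ u, 1 ≤ u → u ≤ m - 1 → ¬ q ^ m - 1 ∣ (1 + ∑ l, q ^ c l) * (q ^ u - 1) :=
    fun u hu hum => not_pow_sub_one_dvd_mul_pow_sub_one hq (by omega) hsmall hu (by omega)
  exact ⟨hcoset, card_image_mul_pow_mod (by omega) (coprime_pow_sub_one (by omega) hmo.pos.ne')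
    fun u hu hum => hcoset u hu (by omega)⟩

theorem stmt16 (q m h n : ℕ) (hq : 2 ≤ q) (hm : 3 ≤ m) (hmo : Odd m)
    (hh3 : 3 ≤ h) (hh : h ≤ (m - 1) / 2) (hn : n = q ^ m - 1)
    (t : ℕ) (ht : 1 ≤ t) (c : Fin t → ℕ) (hc : StrictMono c)
    (hc0 : ∀ l, 0 < c l) (hch : ∀ l, c l ≤ h - 1) :
    (∀ u, 1 ≤ u → u ≤ m - 1 →
        ¬ (n ∣ (1 + ∑ l, q ^ c l) * (q ^ u - 1))) ∧
    (Finset.image (fun s => (1 + ∑ l, q ^ c l) * q ^ s % n)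
      (Finset.range m)).card = m :=
  stmt16_general q m h n hq hmo hh3 hh hn t c hc hch
end

section
/- Let q ≥ 2, m ≥ 3 odd, n = q^m - 1, t ≥ 1, and let h satisfy 3 ≤ h ≤ (m-1)/2. Let i = 1 + Σ_{l=1}^{t} q^{i_l} and j = 1 + Σ_{l=1}^{t} q^{j_l}, where 0 < i_1 < ... < i_t ≤ h-1 and 0 < j_1 < ... < j_t ≤ h-1, and i ≠ j. Then there is no u with 0 ≤ u ≤ m-1 such that i·q^u ≡ j (mod n). -/
/-!
Both `i` and `j` are prime to `q` and smaller than `q ^ h`, where `2 * h < m`. If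
`i * q ^ u ≡ j [MOD q ^ m - 1]`, then either `u + h ≤ m`, and `i * q ^ u < q ^ m - 1` makes the
congruence an equality `i * q ^ u = j`, or `u + h > m`, and multiplying by `q ^ (m - u)` gives
`j * q ^ (m - u) = i` in the same way. Since `q` divides neither `i` nor `j`, the exponent is `0`
in both cases, so `i = j`.
-/

open Finset

lemma one_add_sum_pow_lt {q h t : ℕ} (hq : 2 ≤ q) (hh : 0 < h) {c : Fin t → ℕ}
    (hc : Function.Injective c) (hc0 : ∀ l, 0 < c l) (hch : ∀ l, c l < h) :
    1 + ∑ l, q ^ c l < q ^ h := by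
  have h0 : 0 ∉ univ.map ⟨c, hc⟩ := by simpa using fun l => (hc0 l).ne'
  have hsum : 1 + ∑ l, q ^ c l = ∑ k ∈ insert 0 (univ.map ⟨c, hc⟩), q ^ k := by
    rw [sum_insert h0, sum_map, pow_zero]
    rfl
  rw [hsum]
  refine Nat.geomSum_lt hq fun k hk => ?_
  simp only [mem_insert, mem_map, mem_univ, true_and] at hk
  rcases hk with rfl | ⟨l, rfl⟩
  exacts [hh, hch l]

lemma not_dvd_one_add_sum_pow {q t : ℕ} (hq : 2 ≤ q) {c : Fin t → ℕ} (hc0 : ∀ l, 0 < c l) :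
    ¬ q ∣ 1 + ∑ l, q ^ c l := by
  rw [Nat.dvd_add_left (dvd_sum fun l _ => dvd_pow_self q (hc0 l).ne'), Nat.dvd_one]
  omega

lemma mul_pow_lt_pow_sub_one {q m h v a : ℕ} (hq : 2 ≤ q) (hhm : h < m) (hvh : v + h ≤ m)
    (ha : a < q ^ h) : a * q ^ v < q ^ m - 1 := by
  rcases v.eq_zero_or_pos with rfl | hv
  · have := Nat.pow_lt_pow_right hq hhm
    rw [pow_zero, mul_one]
    omega
  · have hqv : 2 ≤ q ^ v := hq.trans (Nat.le_self_pow hv.ne' q)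
    have : (a + 1) * q ^ v ≤ q ^ m :=
      calc (a + 1) * q ^ v ≤ q ^ h * q ^ v := Nat.mul_le_mul_right _ ha
        _ = q ^ (v + h) := by rw [pow_add, mul_comm]
        _ ≤ q ^ m := Nat.pow_le_pow_right (by omega) hvh
    rw [add_mul, one_mul] at this
    omega

lemma mul_pow_eq_of_modEq {q m h v a b : ℕ} (hq : 2 ≤ q) (hhm : h < m) (hvh : v + h ≤ m)
    (ha : a < q ^ h) (hb : b < q ^ h) (hab : a * q ^ v ≡ b [MOD q ^ m - 1]) : a * q ^ v = b :=
  hab.eq_of_lt_of_lt (mul_pow_lt_pow_sub_one hq hhm hvh ha)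
    (by simpa using mul_pow_lt_pow_sub_one (v := 0) hq hhm (by omega) hb)

lemma modEq_mul_pow_sub_of_mul_pow_modEq {q m u a b : ℕ} (hq : 0 < q) (hu : u ≤ m)
    (hab : a * q ^ u ≡ b [MOD q ^ m - 1]) : b * q ^ (m - u) ≡ a [MOD q ^ m - 1] :=
  calc b * q ^ (m - u) ≡ a * q ^ u * q ^ (m - u) [MOD q ^ m - 1] := (hab.mul_right _).symm
    _ = a * q ^ m := by rw [mul_assoc, ← pow_add, Nat.add_sub_cancel' hu]
    _ ≡ a * 1 [MOD q ^ m - 1] := (Nat.modEq_sub (Nat.one_le_pow _ _ hq)).mul_left a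
    _ = a := mul_one a

lemma eq_zero_of_mul_pow_eq {q v a b : ℕ} (hab : a * q ^ v = b) (hb : ¬ q ∣ b) : v = 0 := by
  by_contra hv
  exact hb (hab ▸ dvd_mul_of_dvd_right (dvd_pow_self q hv) a)

lemma eq_of_mul_pow_modEq {q m h u a b : ℕ} (hq : 2 ≤ q) (hhm : 2 * h < m)
    (ha : a < q ^ h) (hb : b < q ^ h) (haq : ¬ q ∣ a) (hbq : ¬ q ∣ b) (hu : u ≤ m)
    (hab : a * q ^ u ≡ b [MOD q ^ m - 1]) : a = b := by
  rcases le_or_gt (u + h) m with huh | huh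
  · have hab' := mul_pow_eq_of_modEq hq (by omega) huh ha hb hab
    rw [eq_zero_of_mul_pow_eq hab' hbq, pow_zero, mul_one] at hab'
    exact hab'
  · have hba := mul_pow_eq_of_modEq hq (by omega) (by omega) hb ha
      (modEq_mul_pow_sub_of_mul_pow_modEq (by omega) hu hab)
    rw [eq_zero_of_mul_pow_eq hba haq, pow_zero, mul_one] at hba
    exact hba.symm

theorem stmt17_general (q m h n : ℕ) (hq : 2 ≤ q)
    (hh3 : 3 ≤ h) (hh : h ≤ (m - 1) / 2) (hn : n = q ^ m - 1)
    (t : ℕ)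
    (c d : Fin t → ℕ) (hc : StrictMono c) (hd : StrictMono d)
    (hc0 : ∀ l, 0 < c l) (hch : ∀ l, c l ≤ h - 1)
    (hd0 : ∀ l, 0 < d l) (hdh : ∀ l, d l ≤ h - 1)
    (hne : (1 + ∑ l, q ^ c l) ≠ (1 + ∑ l, q ^ d l)) :
    ¬ ∃ u, u ≤ m - 1 ∧
      (1 + ∑ l, q ^ c l) * q ^ u ≡ (1 + ∑ l, q ^ d l) [MOD n] := by
  rintro ⟨u, hu, hmod⟩
  subst hn
  have hh0 : 0 < h := by omega
  have hci : 1 + ∑ l, q ^ c l < q ^ h :=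
    one_add_sum_pow_lt hq hh0 hc.injective hc0 fun l => by have := hch l; omega
  have hdj : 1 + ∑ l, q ^ d l < q ^ h :=
    one_add_sum_pow_lt hq hh0 hd.injective hd0 fun l => by have := hdh l; omega
  exact hne <| eq_of_mul_pow_modEq hq (by omega) hci hdj (not_dvd_one_add_sum_pow hq hc0)
    (not_dvd_one_add_sum_pow hq hd0) (by omega) hmod

theorem stmt17 (q m h n : ℕ) (hq : 2 ≤ q) (hm : 3 ≤ m) (hmo : Odd m)
    (hh3 : 3 ≤ h) (hh : h ≤ (m - 1) / 2) (hn : n = q ^ m - 1)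
    (t : ℕ) (ht : 1 ≤ t)
    (c d : Fin t → ℕ) (hc : StrictMono c) (hd : StrictMono d)
    (hc0 : ∀ l, 0 < c l) (hch : ∀ l, c l ≤ h - 1)
    (hd0 : ∀ l, 0 < d l) (hdh : ∀ l, d l ≤ h - 1)
    (hne : (1 + ∑ l, q ^ c l) ≠ (1 + ∑ l, q ^ d l)) :
    ¬ ∃ u, u ≤ m - 1 ∧
      (1 + ∑ l, q ^ c l) * q ^ u ≡ (1 + ∑ l, q ^ d l) [MOD n] :=
  stmt17_general q m h n hq hh3 hh hn t c d hc hd hc0 hch hd0 hdh hne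
end

section
/- Let m ≥ 2 and h ≥ 1 satisfy 2 ≤ h ≤ (m-2)/4 if m ≡ 2 (mod 4), and let n = 2^m - 1. Then for any i with 0 ≤ i ≤ 2^h - 1, writing j = i + 2^{m-h}, the 2-cyclotomic coset of j modulo n has size m; i.e., n does not divide j(2^u - 1) for any 1 ≤ u ≤ m-1. -/
private lemma two_pow_modeq_one18 (m : ℕ) :
    (2:ℕ)^m ≡ 1 [MOD 2^m - 1] := by
  have h1 : (1:ℕ) ≤ 2^m := Nat.one_le_two_pow
  exact ((Nat.modEq_iff_dvd' h1).mpr dvd_rfl).symm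

private lemma key18 (m h i u : ℕ) (hh2 : 2 ≤ h) (h4 : 4*h ≤ m - 2)
    (hm : 10 ≤ m) (hi : i < 2^h) (hu1 : 1 ≤ u) (hu2 : u ≤ m - h) :
    ¬ ((2^m - 1) ∣ (i + 2^(m-h)) * (2^u - 1)) := by
  intro hdvd
  set n := 2^m - 1 with hn
  set j := i + 2^(m-h) with hj
  have h2u1 : (1:ℕ) ≤ 2^u := Nat.one_le_two_pow
  have hmul : j * (2^u - 1) = j*2^u - j := by rw [Nat.mul_sub, mul_one]
  have hjle : j ≤ j*2^u := Nat.le_mul_of_pos_right j (by positivity)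
  have hme : j ≡ j*2^u [MOD n] := (Nat.modEq_iff_dvd' hjle).mpr (by rwa [← hmul])
  have h2mh1 : (1:ℕ) ≤ 2^(m-h) := Nat.one_le_two_pow
  have e1 : (2:ℕ)^h ≤ 2^(m-h) := Nat.pow_le_pow_right (by norm_num) (by omega)
  have e2 : (2:ℕ)^(m-h) + 2^(m-h) = 2^(m-h+1) := by rw [pow_succ]; ring
  have e3 : (2:ℕ)^(m-h+1) ≤ 2^(m-1) := Nat.pow_le_pow_right (by norm_num) (by omega)
  have e4 : (2:ℕ)^(m-1) * 2 = 2^m := by rw [← pow_succ]; congr 1; omega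
  have e5 : (2:ℕ) ≤ 2^(m-1) := by
    have : (2:ℕ)^1 ≤ 2^(m-1) := Nat.pow_le_pow_right (by norm_num) (by omega)
    simpa using this
  have hjlt : j < n := by omega
  rcases lt_or_ge u h with hA | hB
  · -- case u < h
    have hjlt2 : j < 2^(m-h+1) := by omega
    have h2upos : 0 < (2:ℕ)^u := by positivity
    have hmul2 : j*2^u < 2^(m-h+1)*2^u :=
      (Nat.mul_lt_mul_right h2upos).mpr hjlt2
    have e6 : (2:ℕ)^(m-h+1)*2^u = 2^(m-h+1+u) := by rw [← pow_add]
    have e7 : (2:ℕ)^(m-h+1+u) ≤ 2^m := Nat.pow_le_pow_right (by norm_num) (by omega)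
    have hev : 2 ∣ j*2^u := Dvd.dvd.mul_left (dvd_pow_self 2 (by omega)) j
    have hev2 : 2 ∣ (2:ℕ)^m := dvd_pow_self 2 (by omega)
    have hlt : j*2^u < n := by omega
    have heq : j = j*2^u := by
      have hx := hme
      unfold Nat.ModEq at hx
      rwa [Nat.mod_eq_of_lt hjlt, Nat.mod_eq_of_lt hlt] at hx
    have h2le : (2:ℕ) ≤ 2^u := by
      have : (2:ℕ)^1 ≤ 2^u := Nat.pow_le_pow_right (by norm_num) hu1
      simpa using this
    have := mul_le_mul_right h2le j
    omega
  · -- case h ≤ u ≤ m - h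
    have hr_eq : j*2^u = i*2^u + 2^(u-h)*2^m := by
      rw [hj, add_mul]
      congr 1
      rw [← pow_add, ← pow_add]
      congr 1
      omega
    have h2m : (2:ℕ)^m ≡ 1 [MOD n] := two_pow_modeq_one18 m
    have hr : j*2^u ≡ i*2^u + 2^(u-h) [MOD n] := by
      have h5 := Nat.ModEq.add_left (i*2^u) (Nat.ModEq.mul_left (2^(u-h)) h2m)
      rw [mul_one] at h5
      rw [hr_eq]; exact h5
    have b5 : i*2^u + 2^u ≤ 2^m := by
      have hx : (i+1)*2^u ≤ 2^h*2^u := mul_le_mul_left (by omega) _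
      have hx2 : (2:ℕ)^h*2^u = 2^(h+u) := (pow_add 2 h u).symm
      have hy : (2:ℕ)^(h+u) ≤ 2^m := Nat.pow_le_pow_right (by norm_num) (by omega)
      have hz : (i+1)*2^u = i*2^u + 2^u := by ring
      omega
    have hB1 : (1:ℕ) ≤ 2^(u-h) := Nat.one_le_two_pow
    have b4 : (2:ℕ)^(u-h)*4 ≤ 2^u := by
      have hx : (2:ℕ)^(u-h)*2^2 = 2^(u-h+2) := by rw [← pow_add]
      have hy : (2:ℕ)^(u-h+2) ≤ 2^u := Nat.pow_le_pow_right (by norm_num) (by omega)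
      norm_num at hx
      omega
    have hrlt : i*2^u + 2^(u-h) < n := by omega
    have hreq : j = i*2^u + 2^(u-h) := by
      have hx := hme.trans hr
      unfold Nat.ModEq at hx
      rwa [Nat.mod_eq_of_lt hjlt, Nat.mod_eq_of_lt hrlt] at hx
    have hsplit : (2:ℕ)^(m-h) = 2^(m-h-u)*2^u := by
      rw [← pow_add]; congr 1; omega
    have E : i + 2^(m-h-u)*2^u = i*2^u + 2^(u-h) := by
      rw [← hsplit, ← hj]; exact hreq
    have h2upos : 0 < (2:ℕ)^u := by positivity
    have hBlt : (2:ℕ)^(u-h) < 2^u := by omega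
    have hilt : i < 2^u := by
      have : (2:ℕ)^h ≤ 2^u := Nat.pow_le_pow_right (by norm_num) hB
      omega
    have L1 : (i + 2^(m-h-u)*2^u) % 2^u = i := by
      rw [Nat.add_mul_mod_self_right, Nat.mod_eq_of_lt hilt]
    have R1 : (i*2^u + 2^(u-h)) % 2^u = 2^(u-h) := by
      rw [add_comm, Nat.add_mul_mod_self_right, Nat.mod_eq_of_lt hBlt]
    have E1 : i = 2^(u-h) := by rw [← L1, E, R1]
    have L2 : (i + 2^(m-h-u)*2^u) / 2^u = 2^(m-h-u) := by
      rw [Nat.add_mul_div_right _ _ h2upos, Nat.div_eq_of_lt hilt, zero_add]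
    have R2 : (i*2^u + 2^(u-h)) / 2^u = i := by
      rw [add_comm, Nat.add_mul_div_right _ _ h2upos, Nat.div_eq_of_lt hBlt, zero_add]
    have E2 : (2:ℕ)^(m-h-u) = i := by rw [← L2, E, R2]
    have c1 : u - h < h := by
      have hx : (2:ℕ)^(u-h) < 2^h := by rw [← E1]; exact hi
      exact (Nat.pow_lt_pow_iff_right (by norm_num)).mp hx
    have c2 : m - h - u < h := by
      have hx : (2:ℕ)^(m-h-u) < 2^h := by rw [E2]; exact hi
      exact (Nat.pow_lt_pow_iff_right (by norm_num)).mp hx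
    omega

private lemma part18 (m h i u : ℕ) (hh2 : 2 ≤ h) (h4 : 4*h ≤ m - 2)
    (hm : 10 ≤ m) (hi : i < 2^h) (hu1 : 1 ≤ u) (hu2 : u ≤ m - 1) :
    ¬ ((2^m - 1) ∣ (i + 2^(m-h)) * (2^u - 1)) := by
  rcases le_or_gt u (m-h) with hc | hc
  · exact key18 m h i u hh2 h4 hm hi hu1 hc
  · intro hdvd
    set n := 2^m - 1 with hn
    set j := i + 2^(m-h) with hj
    have h2u1 : (1:ℕ) ≤ 2^u := Nat.one_le_two_pow
    have hmul : j * (2^u - 1) = j*2^u - j := by rw [Nat.mul_sub, mul_one]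
    have hjle : j ≤ j*2^u := Nat.le_mul_of_pos_right j (by positivity)
    have hme : j*2^u ≡ j [MOD n] := ((Nat.modEq_iff_dvd' hjle).mpr (by rwa [← hmul])).symm
    have h2 : j*2^u*2^(m-u) ≡ j*2^(m-u) [MOD n] := hme.mul_right _
    have h3 : j*2^u*2^(m-u) = j*2^m := by
      rw [mul_assoc, ← pow_add]; congr 2; omega
    have h2m : (2:ℕ)^m ≡ 1 [MOD n] := two_pow_modeq_one18 m
    have h5 : j*2^m ≡ j [MOD n] := by
      have hx := Nat.ModEq.mul_left j h2m
      rwa [mul_one] at hx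
    rw [h3] at h2
    have h6 : j*2^(m-u) ≡ j [MOD n] := h2.symm.trans h5
    have hvle : j ≤ j*2^(m-u) := Nat.le_mul_of_pos_right j (by positivity)
    have hdvd2 : n ∣ j*(2^(m-u) - 1) := by
      rw [Nat.mul_sub, mul_one]
      exact (Nat.modEq_iff_dvd' hvle).mp h6.symm
    exact key18 m h i (m-u) hh2 h4 hm hi (by omega) (by omega) hdvd2

theorem stmt18 (m h n : ℕ) (hm : 2 ≤ m) (hm4 : m % 4 = 2)
    (hh2 : 2 ≤ h) (hh : h ≤ (m - 2) / 4) (hn : n = 2 ^ m - 1) :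
    ∀ i ≤ 2 ^ h - 1,
      (∀ u, 1 ≤ u → u ≤ m - 1 →
          ¬ (n ∣ (i + 2 ^ (m - h)) * (2 ^ u - 1))) ∧
      (Finset.image (fun s => (i + 2 ^ (m - h)) * 2 ^ s % n)
        (Finset.range m)).card = m := by
  subst hn
  intro i hi
  have h2h1 : (1:ℕ) ≤ 2^h := Nat.one_le_two_pow
  have hi' : i < 2^h := by omega
  have h4 : 4*h ≤ m - 2 := by omega
  have hm10 : 10 ≤ m := by omega
  refine ⟨fun u hu1 hu2 => part18 m h i u hh2 h4 hm10 hi' hu1 hu2, ?_⟩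
  have hne : ∀ s t, s < t → t < m →
      (i + 2^(m-h)) * 2^s % (2^m-1) ≠ (i + 2^(m-h)) * 2^t % (2^m-1) := by
    intro s t hst htm heq
    have hme : (i + 2^(m-h)) * 2^s ≡ (i + 2^(m-h)) * 2^t [MOD 2^m - 1] := heq
    have h2 := hme.mul_right (2^(m-t))
    have h3 : (i + 2^(m-h)) * 2^t * 2^(m-t) = (i + 2^(m-h)) * 2^m := by
      rw [mul_assoc, ← pow_add]; congr 2; omega
    have h4' : (i + 2^(m-h)) * 2^s * 2^(m-t) = (i + 2^(m-h)) * 2^(s + (m-t)) := by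
      rw [mul_assoc, ← pow_add]
    rw [h3, h4'] at h2
    have h2m : (2:ℕ)^m ≡ 1 [MOD 2^m - 1] := two_pow_modeq_one18 m
    have h5 : (i + 2^(m-h)) * 2^m ≡ (i + 2^(m-h)) [MOD 2^m - 1] := by
      have hx := Nat.ModEq.mul_left (i + 2^(m-h)) h2m
      rwa [mul_one] at hx
    have h6 : (i + 2^(m-h)) * 2^(s+(m-t)) ≡ (i + 2^(m-h)) [MOD 2^m - 1] := h2.trans h5
    have hle : (i + 2^(m-h)) ≤ (i + 2^(m-h)) * 2^(s+(m-t)) :=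
      Nat.le_mul_of_pos_right _ (by positivity)
    have hdvd : (2^m - 1) ∣ (i + 2^(m-h)) * (2^(s+(m-t)) - 1) := by
      rw [Nat.mul_sub, mul_one]
      exact (Nat.modEq_iff_dvd' hle).mp h6.symm
    exact part18 m h i (s+(m-t)) hh2 h4 hm10 hi' (by omega) (by omega) hdvd
  rw [Finset.card_image_of_injOn, Finset.card_range]
  intro s hs t ht hst
  simp only [Finset.coe_range, Set.mem_Iio] at hs ht
  rcases lt_trichotomy s t with hlt | hlt | hlt
  · exact absurd hst (hne s t hlt ht)
  · exact hlt
  · exact absurd hst.symm (hne t s hlt hs)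
end
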